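/- Let p(N) = N^{-1} log Z(N) with Z(N) = ∫_{Ω^N} e^{−H_N} dα^{⊗N}, and p̃(N) = N^{-1} log Z̃(N) with Z̃(N) = ∫_{Ω^N} e^{−N Φ(μ_x)} dα^{⊗N}(x), where φ is bounded. Then |p(N) − p̃(N)| ≤ (n(n−1)/N)·‖φ‖_∞; hence p(N) and p̃(N) either both converge or both diverge, and if they converge their limits are equal. -/

import Mathlib

/-!
Writing `a_j = φ (x ∘ j)` for tuples of indices `j : Fin n → Fin N`, the symmetry of `φ` turns
`H_N(x) / N` into the average of `a_j` over the injective tuples, while `Φ(μ_x)` is the average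
of `a_j` over all tuples. Only a fraction `1 - N(N-1)⋯(N-n+1)/Nⁿ ≤ n(n-1)/(2N)` of the tuples
is not injective, so the two averages differ by at most `n(n-1)‖φ‖_∞/N`, uniformly in `x`.
Finally `H ↦ N⁻¹ log ∫ e^{-H}` is `1/N`-Lipschitz for the sup norm.
-/

open MeasureTheory Filter Finset Real
open scoped ENNReal Classical BigOperators

theorem abs_expect_sub_expect_le {ι : Type*} {s t : Finset ι} (hst : s ⊆ t) (hs : s.Nonempty)
    {a : ι → ℝ} {C : ℝ} (ha : ∀ i ∈ t, |a i| ≤ C) :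
    |𝔼 i ∈ s, a i - 𝔼 i ∈ t, a i| ≤ 2 * C * (1 - #s / #t) := by
  have hs₀ : (0 : ℝ) < #s := by exact_mod_cast hs.card_pos
  have hst' : (#s : ℝ) ≤ #t := by exact_mod_cast card_le_card hst
  have ht₀ : (0 : ℝ) < #t := hs₀.trans_le hst'
  have hsum_le : ∀ u ⊆ t, |∑ i ∈ u, a i| ≤ #u * C := fun u hu =>
    (abs_sum_le_sum_abs _ _).trans <| (sum_le_sum fun i hi => ha i (hu hi)).trans_eq <| by
      rw [sum_const, nsmul_eq_mul]
  have hcard : ((#(t \ s) : ℕ) : ℝ) = #t - #s := by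
    rw [card_sdiff_of_subset hst, Nat.cast_sub (card_le_card hst)]
  have hsplit : 𝔼 i ∈ s, a i - 𝔼 i ∈ t, a i
      = (∑ i ∈ s, a i) / #s * ((#t - #s) / #t) - (∑ i ∈ t \ s, a i) / #t := by
    rw [expect_eq_sum_div_card, expect_eq_sum_div_card, ← sum_sdiff hst]
    field_simp
    ring
  rw [hsplit]
  calc _ ≤ |(∑ i ∈ s, a i) / #s * ((#t - #s) / #t)| + |(∑ i ∈ t \ s, a i) / #t| :=
        abs_sub _ _
    _ = |∑ i ∈ s, a i| / #s * ((#t - #s) / #t) + |∑ i ∈ t \ s, a i| / #t := by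
        rw [abs_mul, abs_div, abs_div, abs_div, abs_of_pos hs₀, abs_of_pos ht₀,
          abs_of_nonneg (sub_nonneg.2 hst')]
    _ ≤ (#s * C) / #s * ((#t - #s) / #t) + (#t - #s) * C / #t := by
        gcongr
        · exact hsum_le s hst
        · exact hcard ▸ hsum_le _ sdiff_subset
    _ = 2 * C * (1 - #s / #t) := by field_simp; ring

theorem one_sub_descFactorial_div_pow_le {N : ℕ} (hN : 0 < N) :
    ∀ n ≤ N, 1 - (N.descFactorial n : ℝ) / N ^ n ≤ n * (n - 1) / (2 * N) := by
  intro n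
  induction n with
  | zero => simp
  | succ k ih =>
    intro hk
    set r : ℝ := N.descFactorial k / N ^ k
    have hr₀ : 0 ≤ r := by positivity
    have hr₁ : r ≤ 1 := div_le_one_of_le₀ (by exact_mod_cast Nat.descFactorial_le_pow N k)
      (by positivity)
    have hstep : (N.descFactorial (k + 1) : ℝ) / N ^ (k + 1) = r * (1 - k / N) := by
      rw [Nat.descFactorial_succ, Nat.cast_mul, Nat.cast_sub (by omega), pow_succ]
      simp only [r]
      field_simp
    calc 1 - (N.descFactorial (k + 1) : ℝ) / N ^ (k + 1) = (1 - r) + r * (k / N) := by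
          rw [hstep]; ring
      _ ≤ k * (k - 1) / (2 * N) + 1 * (k / N) := by gcongr; exact ih (by omega)
      _ = (k + 1 : ℕ) * ((k + 1 : ℕ) - 1) / (2 * N) := by push_cast; field_simp; ring

theorem Tuple.sort_comp_perm_of_strictMono {n : ℕ} {α : Type*} [LinearOrder α] {m : Fin n → α}
    (hm : StrictMono m) (σ : Equiv.Perm (Fin n)) : Tuple.sort (m ∘ σ) = σ⁻¹ := by
  refine (Tuple.eq_sort_iff.2 ⟨?_, fun i j hij h => ?_⟩).symm
  · simpa [Function.comp_def] using hm.monotone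
  · exact (hij.ne (by simpa using hm.injective h)).elim

theorem sum_injective_eq_factorial_nsmul_sum_strictMono {n : ℕ} {α M : Type*} [LinearOrder α]
    [Fintype α] [AddCommMonoid M] (f : (Fin n → α) → M)
    (hf : ∀ (σ : Equiv.Perm (Fin n)) (j : Fin n → α), f (j ∘ σ) = f j) :
    ∑ j with Function.Injective j, f j = n.factorial • ∑ j with StrictMono j, f j := by
  -- every injective tuple is uniquely a strictly monotone one composed with a permutation
  have hbij : ∑ p ∈ (univ : Finset (Equiv.Perm (Fin n))) ×ˢ ({m | StrictMono m} : Finset _),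
      f (p.2 ∘ p.1) = ∑ j with Function.Injective j, f j := by
    refine sum_nbij' (fun p => p.2 ∘ p.1) (fun j => ((Tuple.sort j)⁻¹, j ∘ Tuple.sort j))
      ?_ ?_ ?_ ?_ fun _ _ => rfl
    all_goals intro p hp; simp only [mem_product, mem_filter, mem_univ, true_and] at hp ⊢
    · exact hp.injective.comp p.1.injective
    · exact (Tuple.monotone_sort p).strictMono_of_injective (hp.comp (Equiv.injective _))
    · simp [Tuple.sort_comp_perm_of_strictMono hp, Function.comp_assoc]
    · ext i
      simp
  rw [← hbij, sum_product]
  simp [hf, Fintype.card_perm]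

theorem card_injective_fin {n N : ℕ} :
    #({j | Function.Injective j} : Finset (Fin n → Fin N)) = N.descFactorial n := by
  rw [← Fintype.card_subtype, Fintype.card_congr (Equiv.subtypeInjectiveEquivEmbedding _ _),
    Fintype.card_embedding_eq, Fintype.card_fin, Fintype.card_fin]

theorem abs_mul_expect_injective_sub_expect_le {n N : ℕ} {a : (Fin n → Fin N) → ℝ} {C : ℝ}
    (ha : ∀ j, |a j| ≤ C) (hN : 0 < N) (hnN : n ≤ N) :
    |N * 𝔼 j ∈ {j | Function.Injective j}, a j - N * 𝔼 j, a j| ≤ n * (n - 1) * C := by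
  have hC : 0 ≤ C := (abs_nonneg _).trans (ha (Fin.castLE hnN))
  have hne : ({j | Function.Injective j} : Finset (Fin n → Fin N)).Nonempty :=
    ⟨Fin.castLE hnN, by simpa using Fin.castLE_injective hnN⟩
  have havg := abs_expect_sub_expect_le (subset_univ _) hne fun j _ => ha j
  rw [card_injective_fin, card_univ, Fintype.card_fun, Fintype.card_fin, Fintype.card_fin,
    Nat.cast_pow] at havg
  have hN₀ : (0 : ℝ) < N := by exact_mod_cast hN
  rw [← mul_sub, abs_mul, Nat.abs_cast]
  calc (N : ℝ) * |_| ≤ N * (2 * C * (n * (n - 1) / (2 * N))) := by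
        gcongr
        exact havg.trans (by gcongr; exact one_sub_descFactorial_div_pow_le hN n hnN)
    _ = n * (n - 1) * C := by field_simp

section LogIntegralExp

variable {X : Type*} [MeasurableSpace X] {μ : Measure X} {f g : X → ℝ}

theorem integrable_exp_neg_of_le [IsFiniteMeasure μ] (hf : Measurable f) {K : ℝ}
    (hK : ∀ x, K ≤ f x) : Integrable (fun x => exp (-f x)) μ :=
  .of_bound hf.neg.exp.aestronglyMeasurable (exp (-K)) <| ae_of_all _ fun x => by
    rw [norm_eq_abs, abs_exp]
    exact exp_le_exp.2 (neg_le_neg (hK x))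

variable [NeZero μ] {ε : ℝ}

theorem log_integral_exp_neg_le_add (hf : Integrable (fun x => exp (-f x)) μ)
    (hg : Integrable (fun x => exp (-g x)) μ) (hfg : ∀ x, g x ≤ f x + ε) :
    log (∫ x, exp (-f x) ∂μ) ≤ log (∫ x, exp (-g x) ∂μ) + ε := by
  have hle : ∫ x, exp (-f x) ∂μ ≤ ∫ x, exp ε * exp (-g x) ∂μ :=
    integral_mono hf (hg.const_mul _) fun x => by
      rw [← exp_add]
      exact exp_le_exp.2 (by linarith [hfg x])
  rw [integral_const_mul] at hle
  have := log_le_log (integral_exp_pos hf) hle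
  rwa [log_mul (exp_ne_zero _) (integral_exp_pos hg).ne', log_exp, add_comm] at this

theorem abs_log_integral_exp_neg_sub_le (hf : Integrable (fun x => exp (-f x)) μ)
    (hg : Integrable (fun x => exp (-g x)) μ) (hfg : ∀ x, |f x - g x| ≤ ε) :
    |log (∫ x, exp (-f x) ∂μ) - log (∫ x, exp (-g x) ∂μ)| ≤ ε := by
  rw [abs_sub_le_iff]
  constructor
  · linarith [log_integral_exp_neg_le_add hf hg fun x => by linarith [(abs_le.1 (hfg x)).1]]
  · linarith [log_integral_exp_neg_le_add hg hf fun x => by linarith [(abs_le.1 (hfg x)).2]]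

end LogIntegralExp

section MeanFieldHamiltonian

variable {Ω : Type*} {n N : ℕ}

noncomputable def meanFieldHamiltonian (n : ℕ) (φ : (Fin n → Ω) → ℝ) (x : Fin N → Ω) : ℝ :=
  (N : ℝ) * ((N.choose n : ℝ))⁻¹ * ∑ j : Fin n → Fin N, (if StrictMono j then φ (x ∘ j) else 0)

theorem meanFieldHamiltonian_eq_mul_expect {φ : (Fin n → Ω) → ℝ}
    (hsym : ∀ (σ : Equiv.Perm (Fin n)) (y : Fin n → Ω), φ (y ∘ σ) = φ y) (x : Fin N → Ω) :
    meanFieldHamiltonian n φ x = N * 𝔼 j ∈ {j | Function.Injective j}, φ (x ∘ j) := by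
  rw [meanFieldHamiltonian, expect_eq_sum_div_card, card_injective_fin,
    sum_injective_eq_factorial_nsmul_sum_strictMono _ fun σ j => hsym σ (x ∘ j),
    Nat.descFactorial_eq_factorial_mul_choose, ← sum_filter, nsmul_eq_mul]
  push_cast
  field_simp

end MeanFieldHamiltonian

section Pressure

variable {Ω : Type*} [MeasurableSpace Ω] {n N : ℕ}

noncomputable def pressure (α : Measure Ω) (N : ℕ) (H : (Fin N → Ω) → ℝ) : ℝ :=
  (N : ℝ)⁻¹ * log (∫ x, exp (-H x) ∂(Measure.pi fun _ : Fin N => α))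

theorem abs_pressure_sub_le (α : Measure Ω) [IsProbabilityMeasure α] {H H' : (Fin N → Ω) → ℝ}
    (hH : Measurable H) (hH' : Measurable H') {K ε : ℝ} (hK : ∀ x, K ≤ H' x)
    (hHH' : ∀ x, |H x - H' x| ≤ ε) : |pressure α N H - pressure α N H'| ≤ ε / N := by
  have hK' : ∀ x, K - ε ≤ H x := fun x => by linarith [hK x, (abs_le.1 (hHH' x)).1]
  rw [pressure, pressure, ← mul_sub, abs_mul, abs_inv, Nat.abs_cast, inv_mul_eq_div]
  gcongr
  exact abs_log_integral_exp_neg_sub_le (integrable_exp_neg_of_le hH hK')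
    (integrable_exp_neg_of_le hH' hK) hHH'

theorem measurable_expect_comp {φ : (Fin n → Ω) → ℝ} (hφ : Measurable φ)
    (s : Finset (Fin n → Fin N)) : Measurable fun x : Fin N → Ω => 𝔼 j ∈ s, φ (x ∘ j) := by
  simp only [expect_eq_sum_div_card]
  fun_prop

noncomputable def empiricalMeasure (x : Fin N → Ω) : Measure Ω :=
  (N : ℝ≥0∞)⁻¹ • ∑ i, Measure.dirac (x i)

instance [NeZero N] (x : Fin N → Ω) : IsProbabilityMeasure (empiricalMeasure x) :=
  ⟨by simp [empiricalMeasure, ENNReal.inv_mul_cancel (NeZero.ne (N : ℝ≥0∞))]⟩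

theorem pi_empiricalMeasure [NeZero N] (n : ℕ) (x : Fin N → Ω) :
    Measure.pi (fun _ : Fin n => empiricalMeasure x)
      = ((N : ℝ≥0∞) ^ n)⁻¹ • ∑ j : Fin n → Fin N, Measure.dirac (x ∘ j) := by
  refine Measure.pi_eq fun s hs => ?_
  simp only [empiricalMeasure, Measure.smul_apply, Measure.coe_finsetSum, Finset.sum_apply,
    Measure.dirac_apply' _ (MeasurableSet.univ_pi hs), Measure.dirac_apply' _ (hs _), smul_eq_mul,
    prod_mul_distrib, prod_const, card_univ, Fintype.card_fin, ENNReal.inv_pow]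
  congr 1
  rw [Fintype.prod_sum]
  refine sum_congr rfl fun j _ => ?_
  simp [Set.indicator_apply, prod_boole]

theorem integral_pi_empiricalMeasure [NeZero N] {φ : (Fin n → Ω) → ℝ} (hφ : Measurable φ)
    (x : Fin N → Ω) :
    ∫ y, φ y ∂(Measure.pi fun _ : Fin n => empiricalMeasure x) = 𝔼 j, φ (x ∘ j) := by
  rw [pi_empiricalMeasure, integral_smul_measure, integral_finsetSum_measure fun j _ =>
    integrable_dirac' hφ.stronglyMeasurable enorm_lt_top, expect_eq_sum_div_card]
  simp [integral_dirac' _ _ hφ.stronglyMeasurable, div_eq_inv_mul]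

end Pressure

theorem pressure_compare_and_common_limit_general
    {Ω : Type*} [MeasurableSpace Ω]
    (α : Measure Ω) [IsProbabilityMeasure α] (n : ℕ)
    (φ : (Fin n → Ω) → ℝ) (hmeas : Measurable φ) (C : ℝ) (hb : ∀ y, |φ y| ≤ C)
    (hsym : ∀ (σ : Equiv.Perm (Fin n)) (y : Fin n → Ω), φ (y ∘ σ) = φ y)
    (Φ : Measure Ω → ℝ)
    (hΦ : ∀ μ : Measure Ω, Φ μ = ∫ y, φ y ∂(Measure.pi fun _ : Fin n => μ))
    (p pt : ℕ → ℝ)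
    (hp : ∀ N : ℕ, p N = (N : ℝ)⁻¹ * Real.log (∫ x : Fin N → Ω,
        Real.exp (-((N : ℝ) * ((N.choose n : ℝ))⁻¹ *
          ∑ j : Fin n → Fin N, (if StrictMono j then φ (x ∘ j) else 0)))
          ∂(Measure.pi fun _ : Fin N => α)))
    (hpt : ∀ N : ℕ, pt N = (N : ℝ)⁻¹ * Real.log (∫ x : Fin N → Ω,
        Real.exp (-((N : ℝ) * Φ (((N : ℝ≥0∞))⁻¹ • ∑ i : Fin N, Measure.dirac (x i))))
          ∂(Measure.pi fun _ : Fin N => α))) :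
    (∀ N : ℕ, n ≤ N → |p N - pt N| ≤ ((n : ℝ) * ((n : ℝ) - 1)) / N * C)
    ∧ (∀ L : ℝ, Tendsto p atTop (nhds L) ↔ Tendsto pt atTop (nhds L)) := by
  have hbound : ∀ N : ℕ, n ≤ N → |p N - pt N| ≤ ((n : ℝ) * ((n : ℝ) - 1)) / N * C := by
    intro N hnN
    rcases N.eq_zero_or_pos with rfl | hN
    · simp [hp, hpt]
    have : NeZero N := ⟨hN.ne'⟩
    have hpN : p N = pressure α N fun x => N * 𝔼 j ∈ {j | Function.Injective j}, φ (x ∘ j) := by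
      rw [hp, ← funext (meanFieldHamiltonian_eq_mul_expect hsym)]
      rfl
    have hptN : pt N = pressure α N fun x => N * 𝔼 j, φ (x ∘ j) := by
      simp only [hpt, hΦ, ← integral_pi_empiricalMeasure hmeas]
      rfl
    rw [hpN, hptN, div_mul_eq_mul_div]
    exact abs_pressure_sub_le α ((measurable_expect_comp hmeas _).const_mul _)
      ((measurable_expect_comp hmeas _).const_mul _) (K := N * -C)
      (fun x => by gcongr; exact le_expect univ_nonempty fun j _ => neg_le_of_abs_le (hb _))
      fun x => abs_mul_expect_injective_sub_expect_le (fun j => hb (x ∘ j)) hN hnN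
  refine ⟨hbound, fun L => tendsto_iff_of_dist ?_⟩
  refine squeeze_zero' (.of_forall fun N => dist_nonneg)
    ((eventually_ge_atTop n).mono fun N hN => (dist_eq _ _).trans_le (hbound N hN)) ?_
  simpa using (tendsto_const_div_atTop_nhds_zero_nat ((n : ℝ) * (n - 1))).mul_const C

/-- With `p(N) = N⁻¹ log ∫ e^{−H_N} dα^{⊗N}` for the mean-field
Hamiltonian `H_N` and `p̃(N) = N⁻¹ log ∫ e^{−N Φ(μ_x)} dα^{⊗N}`, where `φ` is bounded
(by `C`) measurable and symmetric, one has `|p(N) − p̃(N)| ≤ n(n−1)/N · ‖φ‖_∞` for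
`N ≥ n`; hence `p` and `p̃` converge together, and to the same limit. -/
theorem pressure_compare_and_common_limit
    {Ω : Type*} [MetricSpace Ω] [CompactSpace Ω] [MeasurableSpace Ω] [BorelSpace Ω]
    (α : Measure Ω) [IsProbabilityMeasure α] (n : ℕ) (hn : 1 ≤ n)
    (φ : (Fin n → Ω) → ℝ) (hmeas : Measurable φ) (C : ℝ) (hb : ∀ y, |φ y| ≤ C)
    (hsym : ∀ (σ : Equiv.Perm (Fin n)) (y : Fin n → Ω), φ (y ∘ σ) = φ y)
    (Φ : Measure Ω → ℝ)
    (hΦ : ∀ μ : Measure Ω, Φ μ = ∫ y, φ y ∂(Measure.pi fun _ : Fin n => μ))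
    (p pt : ℕ → ℝ)
    (hp : ∀ N : ℕ, p N = (N : ℝ)⁻¹ * Real.log (∫ x : Fin N → Ω,
        Real.exp (-((N : ℝ) * ((N.choose n : ℝ))⁻¹ *
          ∑ j : Fin n → Fin N, (if StrictMono j then φ (x ∘ j) else 0)))
          ∂(Measure.pi fun _ : Fin N => α)))
    (hpt : ∀ N : ℕ, pt N = (N : ℝ)⁻¹ * Real.log (∫ x : Fin N → Ω,
        Real.exp (-((N : ℝ) * Φ (((N : ℝ≥0∞))⁻¹ • ∑ i : Fin N, Measure.dirac (x i))))
          ∂(Measure.pi fun _ : Fin N => α))) :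
    (∀ N : ℕ, n ≤ N → |p N - pt N| ≤ ((n : ℝ) * ((n : ℝ) - 1)) / N * C)
    ∧ (∀ L : ℝ, Tendsto p atTop (nhds L) ↔ Tendsto pt atTop (nhds L)) :=
  pressure_compare_and_common_limit_general α n φ hmeas C hb hsym Φ hΦ p pt hp hpt
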